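/- In a simplex-wise graph filtration where edge e1 (step i-1) is negative and edge e2 (step i) is positive, e1 lies on a cycle of G_{i+1} if and only if e1 and e2 connect the same pair of connected components of G_{i-1}, i.e., each of e1 and e2 has one endpoint in each of the same two components C1, C2 of G_{i-1}. -/

import Mathlib

open SimpleGraph Finset

structure FGraph (V : Type) where
  verts : Finset V
  edges : Finset (Sym2 V)

inductive Step (V : Type) where
  | vertex (v : V)
  | edge (e : Sym2 V)
deriving DecidableEq

variable {V : Type} [DecidableEq V] {m : ℕ}

def FGraph.sg (G : FGraph V) : SimpleGraph V :=
  SimpleGraph.fromEdgeSet (G.edges : Set (Sym2 V))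

/-- `x` and `y` lie in the same connected component of `G`. -/
def FGraph.ConnectedIn (G : FGraph V) (x y : V) : Prop :=
  x ∈ G.verts ∧ y ∈ G.verts ∧ G.sg.Reachable x y

/-- The number of connected components of `G`. -/
noncomputable def FGraph.numComponents (G : FGraph V) : ℕ :=
  Nat.card (Quot fun x y : {v // v ∈ G.verts} => G.sg.Adj x.1 y.1)

/-- First Betti number as an integer: `|E| + #components - |V|`. -/
noncomputable def FGraph.betti1 (G : FGraph V) : ℤ :=
  (G.edges.card : ℤ) + (G.numComponents : ℤ) - (G.verts.card : ℤ)

/-- The edge `e` lies on some cycle of `G`. -/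
def FGraph.OnCycle (G : FGraph V) (e : Sym2 V) : Prop :=
  ∃ (x : V) (c : G.sg.Walk x x), c.IsCycle ∧ e ∈ c.edges

def FGraph.addStep (G : FGraph V) : Step V → FGraph V
  | .vertex v => ⟨insert v G.verts, G.edges⟩
  | .edge e => ⟨G.verts, insert e G.edges⟩

def StepValid (G : FGraph V) : Step V → Prop
  | .vertex v => v ∉ G.verts
  | .edge e => e ∉ G.edges ∧ ¬ e.IsDiag ∧ ∀ v ∈ e, v ∈ G.verts

/-- A simplex-wise standard graph filtration of length `m`. -/
structure Filtration (V : Type) (m : ℕ) where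
  steps : Fin m → Step V

namespace Filtration

def graphAt (F : Filtration V m) : ℕ → FGraph V
  | 0 => ⟨∅, ∅⟩
  | i + 1 => if h : i < m then (F.graphAt i).addStep (F.steps ⟨i, h⟩) else F.graphAt i

def Valid (F : Filtration V m) : Prop :=
  ∀ i : Fin m, StepValid (F.graphAt (i : ℕ)) (F.steps i)

/-- The addition index of vertex `x`. -/
noncomputable def vidx (F : Filtration V m) (x : V) : ℕ :=
  sInf {n : ℕ | ∃ i : Fin m, (i : ℕ) = n ∧ F.steps i = Step.vertex x}

/-- The addition index of edge `e`. -/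
noncomputable def eidx (F : Filtration V m) (e : Sym2 V) : ℕ :=
  sInf {n : ℕ | ∃ i : Fin m, (i : ℕ) = n ∧ F.steps i = Step.edge e}

/-- Step `i` adds a negative edge: one merging two connected components. -/
def NegativeAt (F : Filtration V m) (i : Fin m) : Prop :=
  ∃ e, F.steps i = Step.edge e ∧
    (F.graphAt ((i : ℕ) + 1)).numComponents < (F.graphAt (i : ℕ)).numComponents

/-- Step `i` adds a positive edge: one not changing the number of components. -/
def PositiveAt (F : Filtration V m) (i : Fin m) : Prop :=
  ∃ e, F.steps i = Step.edge e ∧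
    (F.graphAt ((i : ℕ) + 1)).numComponents = (F.graphAt (i : ℕ)).numComponents

/-- `x` is the oldest vertex of its connected component in `G_i`. -/
def OldestIn (F : Filtration V m) (i : ℕ) (x : V) : Prop :=
  x ∈ (F.graphAt i).verts ∧
    ∀ y, (F.graphAt i).ConnectedIn x y → F.vidx x ≤ F.vidx y

/-- `x` is the vertex paired with the negative edge added at step `j`:
`x` is the younger of the two oldest vertices of the merged components. -/
def PairedAt (F : Filtration V m) (j : Fin m) (x : V) : Prop :=
  ∃ u v, F.steps j = Step.edge s(u, v) ∧
    ¬ (F.graphAt (j : ℕ)).ConnectedIn u v ∧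
    (F.graphAt (j : ℕ)).ConnectedIn x u ∧ F.OldestIn (j : ℕ) x ∧
    ∃ y, (F.graphAt (j : ℕ)).ConnectedIn y v ∧ F.OldestIn (j : ℕ) y ∧
      F.vidx y < F.vidx x

/-- `x` is unpaired at stage `i`: not paired with any negative edge added before `i`. -/
def UnpairedAt (F : Filtration V m) (i : ℕ) (x : V) : Prop :=
  ∀ j : Fin m, (j : ℕ) < i → ¬ F.PairedAt j x

/-- Step `i` contributes a node of the merge forest (a vertex leaf or a
negative edge internal node). -/
def IsNode (F : Filtration V m) (i : Fin m) : Prop :=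
  (∃ v, F.steps i = Step.vertex v) ∨ F.NegativeAt i

/-- `x` is a representative vertex of the merge-forest node at level `i`. -/
def RepOf (F : Filtration V m) (i : Fin m) (x : V) : Prop :=
  F.steps i = Step.vertex x ∨
    ∃ u v, F.steps i = Step.edge s(u, v) ∧
      ¬ (F.graphAt (i : ℕ)).ConnectedIn u v ∧ (x = u ∨ x = v)

/-- The merge-forest node at level `j` is a child of the (negative-edge)
node at level `i`: `j`'s component at time `i` is one of the two components
merged by the edge at step `i`, and no node of level strictly between `j`
and `i` lies in that component. -/
def MFChild (F : Filtration V m) (j i : Fin m) : Prop :=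
  (j : ℕ) < (i : ℕ) ∧ F.IsNode j ∧
  ∃ u v, F.steps i = Step.edge s(u, v) ∧
    ¬ (F.graphAt (i : ℕ)).ConnectedIn u v ∧
    ∃ x, F.RepOf j x ∧
      ((F.graphAt (i : ℕ)).ConnectedIn x u ∨ (F.graphAt (i : ℕ)).ConnectedIn x v) ∧
      ∀ j' : Fin m, (j : ℕ) < (j' : ℕ) → (j' : ℕ) < (i : ℕ) → F.IsNode j' →
        ∀ y, F.RepOf j' y → ¬ (F.graphAt (i : ℕ)).ConnectedIn x y

end Filtration


section AuxLemmas

variable {V : Type} [DecidableEq V] {m : ℕ}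

/-- Every edge of `graphAt n` has its endpoints among the vertices. -/
lemma Filtration.edge_mem_verts (F : Filtration V m) (hF : F.Valid) :
    ∀ n, ∀ e ∈ (F.graphAt n).edges, ∀ v ∈ e, v ∈ (F.graphAt n).verts := by
  intro n
  induction n with
  | zero => simp [Filtration.graphAt]
  | succ n ih =>
    by_cases h : n < m
    · have hv := hF ⟨n, h⟩
      simp only [Filtration.graphAt, dif_pos h]
      cases hs : F.steps ⟨n, h⟩ with
      | vertex v =>
        simp only [FGraph.addStep]
        intro e he x hx
        exact Finset.mem_insert_of_mem (ih e he x hx)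
      | edge e =>
        rw [hs] at hv
        simp only [FGraph.addStep]
        intro e' he' x hx
        rcases Finset.mem_insert.mp he' with rfl | he'
        · exact hv.2.2 x hx
        · exact ih e' he' x hx
    · simpa only [Filtration.graphAt, dif_neg h] using ih

/-- Reachability transfers to the equivalence closure of adjacency restricted
to the (sub)type of vertices, given the edge-endpoint invariant. -/
lemma reach_eqvGen (G : FGraph V)
    (hinv : ∀ e ∈ G.edges, ∀ v ∈ e, v ∈ G.verts)
    {a b : V} (ha : a ∈ G.verts)
    (h : G.sg.Reachable a b) (hb : b ∈ G.verts) :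
    Relation.EqvGen (fun x y : {v // v ∈ G.verts} => G.sg.Adj x.1 y.1) ⟨a, ha⟩ ⟨b, hb⟩ := by
  rw [SimpleGraph.reachable_iff_reflTransGen] at h
  induction h with
  | refl => exact Relation.EqvGen.refl _
  | tail h1 h2 ih =>
    rename_i c d
    have hcd := h2
    rw [FGraph.sg, SimpleGraph.fromEdgeSet_adj] at h2
    have hc : c ∈ G.verts := hinv _ h2.1 c (Sym2.mem_mk_left c d)
    exact Relation.EqvGen.trans _ _ _ (ih hc) (Relation.EqvGen.rel (⟨c, hc⟩ : {v // v ∈ G.verts}) (⟨d, hb⟩ : {v // v ∈ G.verts}) hcd)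

/-- If the endpoints of a newly inserted edge were already reachable, the
number of components does not decrease. -/
lemma numComponents_le_insert (G : FGraph V)
    (hinv : ∀ e ∈ G.edges, ∀ v ∈ e, v ∈ G.verts)
    {a b : V} (ha : a ∈ G.verts) (hb : b ∈ G.verts)
    (hr : G.sg.Reachable a b) :
    G.numComponents ≤ (FGraph.mk G.verts (insert s(a, b) G.edges)).numComponents := by
  classical
  set G' : FGraph V := ⟨G.verts, insert s(a, b) G.edges⟩ with hG'
  let r : {v // v ∈ G.verts} → {v // v ∈ G.verts} → Prop := fun x y => G.sg.Adj x.1 y.1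
  let r' : {v // v ∈ G.verts} → {v // v ∈ G.verts} → Prop := fun x y => G'.sg.Adj x.1 y.1
  have key : ∀ x y, r' x y → Quot.mk r x = Quot.mk r y := by
    rintro ⟨x, hx⟩ ⟨y, hy⟩ hxy
    have hxy' : (SimpleGraph.fromEdgeSet ((insert s(a, b) G.edges : Finset (Sym2 V)) :
        Set (Sym2 V))).Adj x y := hxy
    rw [SimpleGraph.fromEdgeSet_adj] at hxy'
    obtain ⟨hmem, hne⟩ := hxy'
    rw [Finset.coe_insert, Set.mem_insert_iff] at hmem
    rcases hmem with heq | hmem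
    · rw [Sym2.eq_iff] at heq
      rcases heq with ⟨hxa, hyb⟩ | ⟨hxa, hyb⟩
      · subst hxa; subst hyb
        exact Quot.eqvGen_sound (reach_eqvGen G hinv hx hr hy)
      · subst hxa; subst hyb
        exact Quot.eqvGen_sound (reach_eqvGen G hinv hx hr.symm hy)
    · exact Quot.sound (by
        show G.sg.Adj x y
        rw [FGraph.sg, SimpleGraph.fromEdgeSet_adj]
        exact ⟨hmem, hne⟩)
  have hsurj : Function.Surjective (Quot.lift (Quot.mk r) key) := by
    intro q
    obtain ⟨x, rfl⟩ := Quot.exists_rep q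
    exact ⟨Quot.mk r' x, rfl⟩
  have hfin : Finite (Quot r') :=
    Finite.of_surjective (Quot.mk r') (Quot.mk_surjective)
  exact Nat.card_le_card_of_surjective _ hsurj

/-- Decomposition of reachability after inserting one edge. -/
lemma reachable_insert_edge {S : Set (Sym2 V)} {a b x y : V}
    (h : (SimpleGraph.fromEdgeSet (insert s(a, b) S)).Reachable x y) :
    (SimpleGraph.fromEdgeSet S).Reachable x y ∨
    ((SimpleGraph.fromEdgeSet S).Reachable x a ∧
      (SimpleGraph.fromEdgeSet S).Reachable b y) ∨
    ((SimpleGraph.fromEdgeSet S).Reachable x b ∧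
      (SimpleGraph.fromEdgeSet S).Reachable a y) := by
  rw [SimpleGraph.reachable_iff_reflTransGen] at h
  induction h with
  | refl => exact Or.inl (SimpleGraph.Reachable.refl x)
  | tail h1 h2 ih =>
    rename_i c d
    rw [SimpleGraph.fromEdgeSet_adj, Set.mem_insert_iff] at h2
    obtain ⟨hm, hne⟩ := h2
    rcases hm with heq | hm
    · rw [Sym2.eq_iff] at heq
      rcases heq with ⟨hc, hd⟩ | ⟨hc, hd⟩
      · subst hc; subst hd
        rcases ih with h | ⟨h1', h2'⟩ | ⟨h1', h2'⟩
        · exact Or.inr (Or.inl ⟨h, SimpleGraph.Reachable.refl _⟩)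
        · exact Or.inl (h1'.trans h2'.symm)
        · exact Or.inl h1'
      · subst hc; subst hd
        rcases ih with h | ⟨h1', h2'⟩ | ⟨h1', h2'⟩
        · exact Or.inr (Or.inr ⟨h, SimpleGraph.Reachable.refl _⟩)
        · exact Or.inl h1'
        · exact Or.inl (h1'.trans h2'.symm)
    · have hcd : (SimpleGraph.fromEdgeSet S).Reachable c d :=
        SimpleGraph.Adj.reachable (by rw [SimpleGraph.fromEdgeSet_adj]; exact ⟨hm, hne⟩)
      rcases ih with h | ⟨h1', h2'⟩ | ⟨h1', h2'⟩
      · exact Or.inl (h.trans hcd)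
      · exact Or.inr (Or.inl ⟨h1', h2'.trans hcd⟩)
      · exact Or.inr (Or.inr ⟨h1', h2'.trans hcd⟩)

end AuxLemmas

/-- with `e1 = (u1,w1)` negative at step `i1` and `e2 = (u2,w2)`
positive at step `i2 = i1+1`, the edge `e1` lies on a cycle of `G_{i2+1}` iff
`e1` and `e2` connect the same pair of connected components of `G_{i1}`. -/
theorem stmt_9 {V : Type} [DecidableEq V] {m : ℕ} (F : Filtration V m)
    (hF : F.Valid) (i1 i2 : Fin m) (h12 : (i2 : ℕ) = (i1 : ℕ) + 1)
    (u1 w1 u2 w2 : V)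
    (h1 : F.steps i1 = Step.edge s(u1, w1))
    (h2 : F.steps i2 = Step.edge s(u2, w2))
    (hn : F.NegativeAt i1) (hp : F.PositiveAt i2) :
    (F.graphAt ((i2 : ℕ) + 1)).OnCycle s(u1, w1) ↔
      (((F.graphAt (i1 : ℕ)).ConnectedIn u1 u2 ∧
        (F.graphAt (i1 : ℕ)).ConnectedIn w1 w2) ∨
       ((F.graphAt (i1 : ℕ)).ConnectedIn u1 w2 ∧
        (F.graphAt (i1 : ℕ)).ConnectedIn w1 u2)) := by
  classical
  have hi1 : (i1 : ℕ) < m := i1.isLt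
  have hi2 : (i2 : ℕ) < m := i2.isLt
  set G0 := F.graphAt (i1 : ℕ) with hG0
  have hs1 : F.steps ⟨(i1 : ℕ), hi1⟩ = Step.edge s(u1, w1) := by rw [Fin.eta]; exact h1
  have hs2 : F.steps ⟨(i2 : ℕ), hi2⟩ = Step.edge s(u2, w2) := by rw [Fin.eta]; exact h2
  have hg1 : F.graphAt ((i1 : ℕ) + 1) = ⟨G0.verts, insert s(u1, w1) G0.edges⟩ := by
    simp only [Filtration.graphAt, dif_pos hi1, hs1, FGraph.addStep, hG0]
  have hg1' : F.graphAt (i2 : ℕ) = ⟨G0.verts, insert s(u1, w1) G0.edges⟩ := by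
    rw [h12]; exact hg1
  have hg2 : F.graphAt ((i2 : ℕ) + 1) =
      ⟨G0.verts, insert s(u2, w2) (insert s(u1, w1) G0.edges)⟩ := by
    have : F.graphAt ((i2 : ℕ) + 1) =
        (F.graphAt (i2 : ℕ)).addStep (Step.edge s(u2, w2)) := by
      simp only [Filtration.graphAt, dif_pos hi2, hs2]
    rw [this, hg1']
    rfl
  set E2 : FGraph V := ⟨G0.verts, insert s(u2, w2) (insert s(u1, w1) G0.edges)⟩ with hE2
  -- validity facts
  have hv1 := hF i1
  rw [h1] at hv1
  obtain ⟨he1nm, hd1, hmem1⟩ := hv1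
  have hu1 : u1 ∈ G0.verts := hmem1 u1 (Sym2.mem_mk_left _ _)
  have hw1 : w1 ∈ G0.verts := hmem1 w1 (Sym2.mem_mk_right _ _)
  have hne1 : u1 ≠ w1 := fun h => hd1 (Sym2.mk_isDiag_iff.mpr h)
  have hv2 := hF i2
  rw [h2, hg1'] at hv2
  obtain ⟨he2nm, hd2, hmem2⟩ := hv2
  have hu2 : u2 ∈ G0.verts := hmem2 u2 (Sym2.mem_mk_left _ _)
  have hw2 : w2 ∈ G0.verts := hmem2 w2 (Sym2.mem_mk_right _ _)
  have hne2 : u2 ≠ w2 := fun h => hd2 (Sym2.mk_isDiag_iff.mpr h)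
  have hne21 : s(u2, w2) ≠ s(u1, w1) := fun h =>
    he2nm (by rw [h]; exact Finset.mem_insert_self _ _)
  have hinv : ∀ e ∈ G0.edges, ∀ v ∈ e, v ∈ G0.verts := F.edge_mem_verts hF (i1 : ℕ)
  -- e1 is negative, so its endpoints are not reachable in G0
  have hnr : ¬ G0.sg.Reachable u1 w1 := by
    intro hr
    obtain ⟨e, -, hlt⟩ := hn
    rw [hg1] at hlt
    exact absurd hlt (not_lt.mpr (numComponents_le_insert G0 hinv hu1 hw1 hr))
  -- the graph with e1 deleted
  have hkey : E2.sg \ SimpleGraph.fromEdgeSet {s(u1, w1)} =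
      SimpleGraph.fromEdgeSet (insert s(u2, w2) (G0.edges : Set (Sym2 V))) := by
    ext x y
    simp only [SimpleGraph.sdiff_adj, FGraph.sg, SimpleGraph.fromEdgeSet_adj,
      Finset.coe_insert, Set.mem_insert_iff, Set.mem_singleton_iff, Finset.mem_coe,
      not_and, hE2]
    constructor
    · rintro ⟨⟨hm, hne⟩, hnot⟩
      refine ⟨?_, hne⟩
      rcases hm with h | h | h
      · exact Or.inl h
      · exact absurd hne (hnot h)
      · exact Or.inr h
    · rintro ⟨hm, hne⟩
      refine ⟨⟨?_, hne⟩, fun heq => ?_⟩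
      · rcases hm with h | h
        · exact Or.inl h
        · exact Or.inr (Or.inr h)
      · exfalso
        rcases hm with h | h
        · exact hne21 (h.symm.trans heq)
        · exact he1nm (heq ▸ h)
  have hadj : E2.sg.Adj u1 w1 := by
    rw [FGraph.sg, SimpleGraph.fromEdgeSet_adj]
    refine ⟨?_, hne1⟩
    simp [hE2]
  have hle : G0.sg ≤ SimpleGraph.fromEdgeSet (insert s(u2, w2) (G0.edges : Set (Sym2 V))) :=
    SimpleGraph.fromEdgeSet_mono (Set.subset_insert _ _)
  have hadj2 : (SimpleGraph.fromEdgeSet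
      (insert s(u2, w2) (G0.edges : Set (Sym2 V)))).Adj u2 w2 :=
    (SimpleGraph.fromEdgeSet_adj _).mpr ⟨Set.mem_insert _ _, hne2⟩
  rw [hg2]
  constructor
  · rintro ⟨x, c, hc, he⟩
    have hreach := (SimpleGraph.adj_and_reachable_delete_edges_iff_exists_cycle.mpr
      ⟨x, c, hc, he⟩).2
    rw [SimpleGraph.deleteEdges, hkey] at hreach
    rcases reachable_insert_edge hreach with h | ⟨ha, hb⟩ | ⟨ha, hb⟩
    · exact absurd h hnr
    · exact Or.inl ⟨⟨hu1, hu2, ha⟩, ⟨hw1, hw2, hb.symm⟩⟩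
    · exact Or.inr ⟨⟨hu1, hw2, ha⟩, ⟨hw1, hu2, hb.symm⟩⟩
  · rintro (⟨⟨-, -, hA⟩, ⟨-, -, hB⟩⟩ | ⟨⟨-, -, hA⟩, ⟨-, -, hB⟩⟩)
    · have hr : (SimpleGraph.fromEdgeSet
          (insert s(u2, w2) (G0.edges : Set (Sym2 V)))).Reachable u1 w1 :=
        ((hA.mono hle).trans hadj2.reachable).trans (hB.mono hle).symm
      exact SimpleGraph.adj_and_reachable_delete_edges_iff_exists_cycle.mp
        ⟨hadj, by rw [SimpleGraph.deleteEdges, hkey]; exact hr⟩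
    · have hr : (SimpleGraph.fromEdgeSet
          (insert s(u2, w2) (G0.edges : Set (Sym2 V)))).Reachable u1 w1 :=
        ((hA.mono hle).trans hadj2.symm.reachable).trans (hB.mono hle).symm
      exact SimpleGraph.adj_and_reachable_delete_edges_iff_exists_cycle.mp
        ⟨hadj, by rw [SimpleGraph.deleteEdges, hkey]; exact hr⟩
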